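/- arXiv:1707.09716 — 2 statements merged into one kernel-verified Lean document; each statement's English description precedes it below -/
import Mathlib

section
/- Consider the Star architecture in FOIL: one center instance x of type C with port p, and a finite set S of instances of type S each with port q. An interaction is a nonempty subset of the port set {p} ∪ {q_s : s ∈ S}. Let Φ_Star be the formula ∃c:C. ∀s:S. (c.p ⇒ ... ) encoding that every interaction contains p, contains at least one q_s, and contains no two distinct q_s, q_{s'}. Then for every configuration γ, γ ⊨ Φ_Star ↔ ∀ a ∈ γ, ∃ s ∈ S, a = {p, q_s}. -/
universe u

/-- Ports of the Star architecture: the center's port `p` and one port `q s`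
for each instance `s` of the satellite type `S`. -/
inductive StarPort (σ : Type u) : Type u
  | p : StarPort σ
  | q : σ → StarPort σ

/-- Star architecture in FOIL: one center instance with port `p` and a finite nonempty
set of satellite instances `σ`, each with port `q s`.  Interactions are nonempty subsets
of the port set.  A configuration `γ` (nonempty set of nonempty interactions) satisfies
the Star formula — asserting pointwise that each interaction contains `p`, contains at
least one `q s`, and no two distinct `q s`, `q s'` — precisely when every `a ∈ γ` has
the form `{p, q s}` for some `s`. -/
theorem star_foil_characterization {σ : Type u} [Finite σ] [Nonempty σ]
    (γ : Set (Set (StarPort σ))) (hγ : γ.Nonempty) (hne : ∀ a ∈ γ, a.Nonempty) :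
    (∀ a ∈ γ,
        StarPort.p ∈ a ∧ (∃ s : σ, StarPort.q s ∈ a) ∧
        ∀ s s' : σ, s ≠ s' → ¬ (StarPort.q s ∈ a ∧ StarPort.q s' ∈ a)) ↔
      ∀ a ∈ γ, ∃ s : σ, a = {StarPort.p, StarPort.q s} := by
  constructor
  · intro h a ha
    obtain ⟨hp, ⟨s, hs⟩, huniq⟩ := h a ha
    refine ⟨s, ?_⟩
    ext x
    constructor
    · intro hx
      cases x with
      | p => exact Set.mem_insert _ _
      | q t =>
        have : t = s := by
          by_contra hts
          exact huniq t s hts ⟨hx, hs⟩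
        subst this
        exact Set.mem_insert_of_mem _ rfl
    · intro hx
      rcases hx with hx | hx
      · subst hx; exact hp
      · simp only [Set.mem_singleton_iff] at hx; subst hx; exact hs
  · intro h a ha
    obtain ⟨s, rfl⟩ := h a ha
    refine ⟨Set.mem_insert _ _, ⟨s, Set.mem_insert_of_mem _ rfl⟩, ?_⟩
    rintro t t' htt ⟨ht, ht'⟩
    simp only [Set.mem_insert_iff, Set.mem_singleton_iff] at ht ht'
    rcases ht with h1 | h1 <;> rcases ht' with h2 | h2 <;>
      simp_all [StarPort.q.injEq]
end

section
/- For the Require macro semantics 'T1.p Require T2.q', interpreted as: for every instance c1 of T1, there exists exactly one instance c2 of T2 such that every interaction containing c1.p contains c2.q and no other instance's q-port — prove this is equivalent to: every interaction a in the configuration containing a port c1.p (for any instance c1 of T1) contains exactly one port of type T2.q. -/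
universe u

/-- Port instances for two component types: each instance `c : I1` of type `T1` has a
port `c.p` and each instance `c : I2` of type `T2` has a port `c.q`. -/
inductive RPort (I1 I2 : Type u) : Type u
  | p : I1 → RPort I1 I2
  | q : I2 → RPort I1 I2

theorem exists_imp_and_forall_ne_imp_not_iff_imp_existsUnique {α : Sort*} [Nonempty α]
    (P : Prop) (Q : α → Prop) :
    (∃ x, (P → Q x) ∧ ∀ y, y ≠ x → P → ¬Q y) ↔ (P → ∃! x, Q x) := by
  constructor
  · rintro ⟨x, hx, hother⟩ hP
    exact ⟨x, hx hP, fun y hy => by_contra fun hyx => hother y hyx hP hy⟩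
  · intro h
    by_cases hP : P
    · obtain ⟨x, hx, huniq⟩ := h hP
      exact ⟨x, fun _ => hx, fun y hyx _ hy => hyx (huniq y hy)⟩
    · exact ⟨Classical.arbitrary α, fun h => absurd h hP, fun _ _ h => absurd h hP⟩

theorem require_macro_characterization_general {I1 I2 : Type u}
    [Nonempty I2] (γ : Set (Set (RPort I1 I2))) :
    (∀ a ∈ γ, ∀ c1 : I1, ∃ c2 : I2,
        (RPort.p c1 ∈ a → RPort.q c2 ∈ a) ∧
        ∀ c3 : I2, c3 ≠ c2 → (RPort.p c1 ∈ a → RPort.q c3 ∉ a)) ↔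
      ∀ a ∈ γ, (∃ c1 : I1, RPort.p c1 ∈ a) →
        ∃! c2 : I2, RPort.q c2 ∈ a :=
  forall₂_congr fun _ _ =>
    (forall_congr' fun _ => exists_imp_and_forall_ne_imp_not_iff_imp_existsUnique _ _).trans
      exists_imp.symm

/-- Semantics of the Require macro `T1.p Require T2.q`, i.e., of the FOIL formula
`∀c1:T1. ∃c2:T2. ∀c3:T2 (c3 ≠ c2). (c1.p ⇒ c2.q ∧ ¬c3.q)` — interpreted pointwise
over the interactions of the configuration `γ`, with the existential choice of `c2`
allowed to depend on the interaction: a configuration `γ` satisfies it iff every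
interaction of `γ` containing a port `c1.p` (for some instance `c1` of `T1`)
contains exactly one port of type `T2.q`. -/
theorem require_macro_characterization {I1 I2 : Type u} [Finite I1] [Finite I2]
    [Nonempty I2] (γ : Set (Set (RPort I1 I2)))
    (hγ : γ.Nonempty) (hne : ∀ a ∈ γ, a.Nonempty) :
    (∀ a ∈ γ, ∀ c1 : I1, ∃ c2 : I2,
        (RPort.p c1 ∈ a → RPort.q c2 ∈ a) ∧
        ∀ c3 : I2, c3 ≠ c2 → (RPort.p c1 ∈ a → RPort.q c3 ∉ a)) ↔
      ∀ a ∈ γ, (∃ c1 : I1, RPort.p c1 ∈ a) →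
        ∃! c2 : I2, RPort.q c2 ∈ a :=
  require_macro_characterization_general γ
end
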